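/- The MLN partition function satisfies M_min · C_{n,m} · Z(n) · Z(m) ≤ Z(n+m) ≤ M_max · C_{n,m} · Z(n) · Z(m), where C_{n,m} is the number of ways to extend a pair consisting of an interpretation on [n] and an interpretation on [n+1..n+m] to a full interpretation on [n+m]. -/

import Mathlib

open scoped BigOperators

structure Vocab where
  Rel : Type
  [fintypeRel : Fintype Rel]
  [decEqRel : DecidableEq Rel]
  ar : Rel → ℕ

attribute [instance] Vocab.fintypeRel Vocab.decEqRel

def Interp (V : Vocab) (D : Type) : Type :=
  (r : V.Rel) → (Fin (V.ar r) → D) → Bool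

noncomputable instance (V : Vocab) (D : Type) [Fintype D] [DecidableEq D] :
    Fintype (Interp V D) := by
  unfold Interp; infer_instance

noncomputable instance (V : Vocab) (D : Type) : DecidableEq (Interp V D) :=
  Classical.decEq _

def restrict {V : Vocab} {D E : Type} (f : E → D) (ω : Interp V D) : Interp V E :=
  fun r t => ω r (f ∘ t)

structure Formula (V : Vocab) where
  arity : ℕ
  sat : Interp V (Fin arity) → Bool

structure MLN (V : Vocab) where
  formulas : List (Formula V × ℝ)

noncomputable def nGround {V : Vocab} {D : Type} [Fintype D] [DecidableEq D]
    (φ : Formula V) (ω : Interp V D) : ℕ :=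
  Fintype.card {c : Fin φ.arity ↪ D // φ.sat (restrict (fun i => c i) ω) = true}

noncomputable def weight {V : Vocab} {D : Type} [Fintype D] [DecidableEq D]
    (Φ : MLN V) (ω : Interp V D) : ℝ :=
  Real.exp ((Φ.formulas.map (fun p => p.2 * (nGround p.1 ω : ℝ))).sum)

noncomputable def kweight {V : Vocab} (Φ : MLN V) (k : ℕ) (ν : Interp V (Fin k)) : ℝ :=
  Real.exp (((Φ.formulas.filter (fun p => p.1.arity == k)).map
      (fun p => p.2 * (nGround p.1 ν : ℝ))).sum)

noncomputable def downset {V : Vocab} {n k : ℕ} (ω : Interp V (Fin n))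
    (s : Finset (Fin n)) (h : s.card = k) : Interp V (Fin k) :=
  restrict (fun i => ((s.orderIsoOfFin h i : Fin n))) ω

noncomputable def Zpart {V : Vocab} (Φ : MLN V) (N : ℕ) : ℝ :=
  ∑ ω : Interp V (Fin N), weight Φ ω

noncomputable def wmax {V : Vocab} (Φ : MLN V) (k : ℕ) : ℝ :=
  ⨆ ν : Interp V (Fin k), kweight Φ k ν

noncomputable def wmin {V : Vocab} (Φ : MLN V) (k : ℕ) : ℝ :=
  ⨅ ν : Interp V (Fin k), kweight Φ k ν

def exponent (n m k : ℕ) : ℕ := (n + m).choose k - n.choose k - m.choose k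

noncomputable def Mmax {V : Vocab} (Φ : MLN V) (d n m : ℕ) : ℝ :=
  ∏ k ∈ Finset.Icc 1 d, (wmax Φ k) ^ (exponent n m k)

noncomputable def Mmin {V : Vocab} (Φ : MLN V) (d n m : ℕ) : ℝ :=
  ∏ k ∈ Finset.Icc 1 d, (wmin Φ k) ^ (exponent n m k)

noncomputable def Pdist {V : Vocab} (Φ : MLN V) (N : ℕ) (ω : Interp V (Fin N)) : ℝ :=
  weight Φ ω / Zpart Φ N

noncomputable def marg {V : Vocab} (Φ : MLN V) (n m : ℕ) (ω : Interp V (Fin n)) : ℝ :=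
  ∑ ω' ∈ Finset.univ.filter
      (fun ω' : Interp V (Fin (n + m)) => restrict (Fin.castAdd m) ω' = ω),
    Pdist Φ (n + m) ω'

/-! Each grounding of a formula is counted at its image, a subset `s` of the domain of size
equal to the arity; hence `w(ω)` factors as a product over all subsets `s` of the factors
`w_{|s|}(ω↓s)` (`weightOn`). Subsets of `[n]` or of `[n+1..n+m]` reproduce `w(ω↓[n])` and
`w(ω↓[n+1..n+m])`; the remaining "crossing" subsets of size `k` number
`C(n+m,k) - C(n,k) - C(m,k)`, and each contributes a factor between `w_k^min` and `w_k^max`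
(which is `1` once `k` exceeds every arity). Summing these bounds over the fibres of
`ω ↦ (ω↓[n], ω↓[n+1..n+m])`, all of size `C`, gives the bounds on `Z(n+m)`. -/

open Finset

section Crossing

variable {α : Type*} [Fintype α] [DecidableEq α]

def crossing (L R : Finset α) : Finset (Finset α) := {s | ¬ s ⊆ L ∧ ¬ s ⊆ R}

lemma prod_eq_prod_powerset_mul_prod_powerset_mul_prod_crossing {M : Type*} [CommMonoid M]
    {L R : Finset α} (hLR : Disjoint L R) {g : Finset α → M} (hg : g ∅ = 1) :
    ∏ s, g s = (∏ s ∈ L.powerset, g s) * (∏ s ∈ R.powerset, g s) * ∏ s ∈ crossing L R, g s := by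
  have hR : ∏ s ∈ R.powerset, g s = ∏ s with ¬ s ⊆ L ∧ s ⊆ R, g s := by
    refine (prod_subset (fun s hs => by simp_all) fun s hsR hs => ?_).symm
    have hsL : s ⊆ L := by simp_all
    rw [(disjoint_self_iff_empty _).1 (hLR.mono hsL (mem_powerset.1 hsR)), hg]
  rw [← prod_filter_mul_prod_filter_not univ (· ⊆ L),
    ← prod_filter_mul_prod_filter_not (filter (¬ · ⊆ L) univ) (· ⊆ R),
    filter_filter, filter_filter, filter_subset_univ, hR, crossing, mul_assoc]

lemma card_crossing_filter_card {L R : Finset α} (hLR : Disjoint L R) {k : ℕ} (hk : k ≠ 0) :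
    #{s ∈ crossing L R | s.card = k} =
      (Fintype.card α).choose k - (#L).choose k - (#R).choose k := by
  have hset : {s ∈ crossing L R | s.card = k} =
      powersetCard k univ \ (powersetCard k L ∪ powersetCard k R) := by
    ext s
    simp only [crossing, mem_filter, mem_univ, true_and, mem_sdiff, mem_union, mem_powersetCard,
      subset_univ]
    tauto
  have hdisj : Disjoint (powersetCard k L) (powersetCard k R) := by
    refine disjoint_left.2 fun s hsL hsR => hk ?_
    rw [mem_powersetCard] at hsL hsR
    rw [← hsL.2, (disjoint_self_iff_empty _).1 (hLR.mono hsL.1 hsR.1), card_empty]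
  rw [hset, card_sdiff_of_subset (union_subset (powersetCard_mono (subset_univ _))
      (powersetCard_mono (subset_univ _))), card_union_of_disjoint hdisj, card_powersetCard,
    card_powersetCard, card_powersetCard, card_univ, Nat.sub_sub]

lemma prod_crossing_eq_prod_pow {M : Type*} [CommMonoid M] {L R : Finset α}
    (hLR : Disjoint L R) {d : ℕ} (w : ℕ → M) (hw : ∀ k, d < k → w k = 1) :
    ∏ s ∈ crossing L R, w s.card =
      ∏ k ∈ Icc 1 d, w k ^ ((Fintype.card α).choose k - (#L).choose k - (#R).choose k) := by
  have hsupp : ∀ s ∈ crossing L R, w s.card ≠ 1 → s.card ∈ Icc 1 d := by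
    intro s hs hws
    have hne : s ≠ ∅ := by rintro rfl; simp [crossing] at hs
    exact mem_Icc.2 ⟨card_pos.2 (nonempty_iff_ne_empty.2 hne), not_lt.1 (mt (hw _) hws)⟩
  rw [← prod_filter_of_ne hsupp,
    ← prod_fiberwise_of_maps_to' (fun s hs => (mem_filter.1 hs).2) w]
  refine prod_congr rfl fun k hk => ?_
  rw [prod_const, filter_filter,
    ← card_crossing_filter_card hLR (Nat.one_le_iff_ne_zero.1 (mem_Icc.1 hk).1)]
  congr 2
  exact filter_congr fun s _ => ⟨fun h => h.2, fun h => ⟨h ▸ hk, h⟩⟩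

end Crossing

lemma sum_comp_eq_nsmul_sum_of_card_fiber {α β M : Type*} [Fintype α] [Fintype β]
    [DecidableEq β] [AddCommMonoid M] (f : α → β) {C : ℕ} (hC : ∀ b, #{a | f a = b} = C)
    (g : β → M) : ∑ a, g (f a) = C • ∑ b, g b := by
  rw [← sum_fiberwise univ f, smul_sum]
  refine sum_congr rfl fun b _ => ?_
  rw [sum_congr rfl fun a ha => congrArg g (mem_filter.1 ha).2, sum_const, hC]

section

variable {V : Vocab}

instance (D : Type) : Nonempty (Interp V D) := ⟨fun _ _ => false⟩

lemma nGround_restrict {D E : Type} [Fintype D] [DecidableEq D] [Fintype E] [DecidableEq E]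
    (φ : Formula V) (ω : Interp V D) (e : E ↪ D) :
    nGround φ (restrict e ω) =
      #{c : Fin φ.arity ↪ D | φ.sat (restrict c ω) = true ∧ ∀ i, c i ∈ Set.range e} := by
  rw [nGround, Fintype.card_subtype]
  refine card_bij (fun c _ => c.trans e) (fun c hc => ?_) (fun c _ c' _ h => ?_) fun c hc => ?_
  · simp only [mem_filter, mem_univ, true_and] at hc ⊢
    exact ⟨hc, fun i => ⟨c i, rfl⟩⟩
  · exact DFunLike.ext _ _ fun i => e.injective (DFunLike.congr_fun h i)
  · simp only [mem_filter, mem_univ, true_and] at hc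
    let c' : Fin φ.arity ↪ E :=
      (c.codRestrict _ hc.2).trans (Equiv.ofInjective e e.injective).symm.toEmbedding
    have hce : ∀ i, e (c' i) = c i := fun i =>
      Equiv.apply_ofInjective_symm e.injective ⟨c i, hc.2 i⟩
    refine ⟨c', ?_, DFunLike.ext _ _ hce⟩
    simp only [mem_filter, mem_univ, true_and]
    show φ.sat (restrict (fun i => e (c' i)) ω) = true
    rw [show (fun i => e (c' i)) = c from funext hce]
    exact hc.1

lemma downset_eq_restrict {N : ℕ} (ω : Interp V (Fin N)) (s : Finset (Fin N)) :
    downset ω s rfl = restrict (s.orderEmbOfFin rfl).toEmbedding ω := rfl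

lemma nGround_eq_sum_downset (φ : Formula V) {N : ℕ} (ω : Interp V (Fin N)) :
    nGround φ ω = ∑ s ∈ powersetCard φ.arity univ, nGround φ (downset ω s rfl) := by
  rw [nGround, Fintype.card_subtype, card_eq_sum_card_fiberwise (f := fun c => univ.map c)
    (t := powersetCard φ.arity univ) (fun c _ => by simp [mem_powersetCard])]
  refine sum_congr rfl fun s hs => ?_
  rw [downset_eq_restrict, nGround_restrict, filter_filter]
  refine congrArg card (filter_congr fun c _ => and_congr_right fun _ => ?_)
  simp only [RelEmbedding.coe_toEmbedding, range_orderEmbOfFin, mem_coe]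
  refine ⟨fun h i => h ▸ mem_map_of_mem c (mem_univ i), fun h => ?_⟩
  refine eq_of_subset_of_card_le (fun x hx => ?_) ?_
  · obtain ⟨i, -, rfl⟩ := mem_map.1 hx
    exact h i
  · rw [(mem_powersetCard_univ.1 hs), card_map, card_univ, Fintype.card_fin]

noncomputable def weightOn (Φ : MLN V) {N : ℕ} (ω : Interp V (Fin N)) (s : Finset (Fin N)) : ℝ :=
  kweight Φ s.card (downset ω s rfl)

lemma weight_eq_prod_weightOn (Φ : MLN V) {N : ℕ} (ω : Interp V (Fin N)) :
    weight Φ ω = ∏ s, weightOn Φ ω s := by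
  have hterm : ∀ p : Formula V × ℝ, p.2 * (nGround p.1 ω : ℝ) =
      ∑ s, if p.1.arity = s.card then p.2 * (nGround p.1 (downset ω s rfl) : ℝ) else 0 := by
    intro p
    rw [nGround_eq_sum_downset, Nat.cast_sum, mul_sum, ← sum_filter]
    congr 1
    ext s
    simp [eq_comm]
  simp only [weight, weightOn, kweight, ← Real.exp_sum]
  congr 1
  have hswap := Multiset.sum_map_sum (m := (Φ.formulas : Multiset (Formula V × ℝ))) (s := univ)
    (f := fun p (s : Finset (Fin N)) =>
      if p.1.arity = s.card then p.2 * (nGround p.1 (downset ω s rfl) : ℝ) else 0)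
  simp only [Multiset.map_coe, Multiset.sum_coe] at hswap
  simp only [hterm, hswap, List.sum_map_ite, List.map_const', List.sum_replicate, smul_zero,
    add_zero, Bool.beq_eq_decide_eq]

lemma weightOn_eq_kweight (Φ : MLN V) {N k : ℕ} (ω : Interp V (Fin N)) {s : Finset (Fin N)}
    (h : s.card = k) : weightOn Φ ω s = kweight Φ k (downset ω s h) := by
  subst h; rfl

lemma weightOn_map (Φ : MLN V) {n N : ℕ} (j : Fin n ↪o Fin N) (ω : Interp V (Fin N))
    (t : Finset (Fin n)) :
    weightOn Φ ω (t.map j.toEmbedding) = weightOn Φ (restrict j ω) t := by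
  rw [weightOn_eq_kweight Φ ω (card_map _), weightOn]
  congr 1
  have hsort :
      (fun i => j (t.orderEmbOfFin rfl i)) = (t.map j.toEmbedding).orderEmbOfFin (card_map _) :=
    orderEmbOfFin_unique _ (fun i => mem_map_of_mem _ (t.orderEmbOfFin_mem rfl i))
      (j.strictMono.comp (t.orderEmbOfFin rfl).strictMono)
  simp only [downset, coe_orderIsoOfFin_apply, ← hsort]
  rfl

lemma prod_weightOn_powerset_map (Φ : MLN V) {n N : ℕ} (j : Fin n ↪o Fin N)
    (ω : Interp V (Fin N)) :
    ∏ s ∈ (univ.map j.toEmbedding).powerset, weightOn Φ ω s = weight Φ (restrict j ω) := by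
  have hpow :
      (univ.map j.toEmbedding).powerset = univ.map (mapEmbedding j.toEmbedding).toEmbedding := by
    ext s
    simp [subset_map_iff, eq_comm]
  rw [hpow, prod_map, weight_eq_prod_weightOn]
  exact prod_congr rfl fun t _ => weightOn_map Φ j ω t

lemma kweight_pos (Φ : MLN V) (k : ℕ) (ν : Interp V (Fin k)) : 0 < kweight Φ k ν :=
  Real.exp_pos _

lemma weight_pos (Φ : MLN V) {D : Type} [Fintype D] [DecidableEq D] (ω : Interp V D) :
    0 < weight Φ ω :=
  Real.exp_pos _

lemma kweight_le_wmax (Φ : MLN V) (k : ℕ) (ν : Interp V (Fin k)) : kweight Φ k ν ≤ wmax Φ k :=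
  le_ciSup (Set.finite_range _).bddAbove ν

lemma wmin_le_kweight (Φ : MLN V) (k : ℕ) (ν : Interp V (Fin k)) : wmin Φ k ≤ kweight Φ k ν :=
  ciInf_le (Set.finite_range _).bddBelow ν

lemma wmin_nonneg (Φ : MLN V) (k : ℕ) : 0 ≤ wmin Φ k :=
  Real.iInf_nonneg fun ν => (kweight_pos Φ k ν).le

lemma kweight_eq_one (Φ : MLN V) {k : ℕ} (h : ∀ p ∈ Φ.formulas, p.1.arity ≠ k)
    (ν : Interp V (Fin k)) : kweight Φ k ν = 1 := by
  rw [kweight, List.filter_eq_nil_iff.2 (by simpa using h), List.map_nil, List.sum_nil,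
    Real.exp_zero]

lemma wmax_eq_one (Φ : MLN V) {k : ℕ} (h : ∀ p ∈ Φ.formulas, p.1.arity ≠ k) : wmax Φ k = 1 := by
  simp only [wmax, kweight_eq_one Φ h, ciSup_const]

lemma wmin_eq_one (Φ : MLN V) {k : ℕ} (h : ∀ p ∈ Φ.formulas, p.1.arity ≠ k) : wmin Φ k = 1 := by
  simp only [wmin, kweight_eq_one Φ h, ciInf_const]

def leftBlock (n m : ℕ) : Finset (Fin (n + m)) := univ.map (Fin.castAddOrderEmb m).toEmbedding

def rightBlock (n m : ℕ) : Finset (Fin (n + m)) := univ.map (Fin.natAddOrderEmb n).toEmbedding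

lemma disjoint_leftBlock_rightBlock (n m : ℕ) : Disjoint (leftBlock n m) (rightBlock n m) := by
  simp only [leftBlock, rightBlock, disjoint_left, mem_map, mem_univ, true_and]
  rintro _ ⟨i, rfl⟩ ⟨j, hj⟩
  have : n + (j : ℕ) = i := congrArg Fin.val hj
  omega

lemma card_leftBlock (n m : ℕ) : #(leftBlock n m) = n := by simp [leftBlock]

lemma card_rightBlock (n m : ℕ) : #(rightBlock n m) = m := by simp [rightBlock]

lemma weight_eq_mul_prod_crossing (Φ : MLN V) {n m : ℕ}
    (hd : ∀ p ∈ Φ.formulas, 1 ≤ p.1.arity) (ω : Interp V (Fin (n + m))) :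
    weight Φ ω = weight Φ (restrict (Fin.castAdd m) ω) * weight Φ (restrict (Fin.natAdd n) ω) *
      ∏ s ∈ crossing (leftBlock n m) (rightBlock n m), weightOn Φ ω s := by
  have hempty : weightOn Φ ω ∅ = 1 :=
    kweight_eq_one Φ (fun p hp => (Nat.one_le_iff_ne_zero.1 (hd p hp))) _
  rw [weight_eq_prod_weightOn,
    prod_eq_prod_powerset_mul_prod_powerset_mul_prod_crossing (disjoint_leftBlock_rightBlock n m)
      hempty, leftBlock, rightBlock, prod_weightOn_powerset_map, prod_weightOn_powerset_map]
  rfl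

lemma prod_crossing_eq_Mmax_Mmin (Φ : MLN V) {d : ℕ} (hd : ∀ p ∈ Φ.formulas, p.1.arity ≤ d)
    (n m : ℕ) :
    ∏ s ∈ crossing (leftBlock n m) (rightBlock n m), wmax Φ s.card = Mmax Φ d n m ∧
    ∏ s ∈ crossing (leftBlock n m) (rightBlock n m), wmin Φ s.card = Mmin Φ d n m := by
  have hne : ∀ k, d < k → ∀ p ∈ Φ.formulas, p.1.arity ≠ k :=
    fun k hk p hp => ((hd p hp).trans_lt hk).ne
  simp only [prod_crossing_eq_prod_pow (disjoint_leftBlock_rightBlock n m) _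
      fun k hk => wmax_eq_one Φ (hne k hk),
    prod_crossing_eq_prod_pow (disjoint_leftBlock_rightBlock n m) _
      fun k hk => wmin_eq_one Φ (hne k hk),
    Fintype.card_fin, card_leftBlock, card_rightBlock, Mmax, Mmin, exponent, and_self]

lemma weight_split_bounds (Φ : MLN V) {d n m : ℕ}
    (hd : ∀ p ∈ Φ.formulas, 1 ≤ p.1.arity ∧ p.1.arity ≤ d) (ω : Interp V (Fin (n + m))) :
    weight Φ (restrict (Fin.castAdd m) ω) * weight Φ (restrict (Fin.natAdd n) ω) *
        Mmin Φ d n m ≤ weight Φ ω ∧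
      weight Φ ω ≤ weight Φ (restrict (Fin.castAdd m) ω) *
        weight Φ (restrict (Fin.natAdd n) ω) * Mmax Φ d n m := by
  obtain ⟨hmax, hmin⟩ := prod_crossing_eq_Mmax_Mmin Φ (fun p hp => (hd p hp).2) n m
  have hblocks := (mul_pos (weight_pos Φ (restrict (Fin.castAdd m) ω))
    (weight_pos Φ (restrict (Fin.natAdd n) ω))).le
  rw [weight_eq_mul_prod_crossing Φ (fun p hp => (hd p hp).1), ← hmax, ← hmin]
  exact ⟨mul_le_mul_of_nonneg_left (prod_le_prod (fun _ _ => wmin_nonneg Φ _)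
      fun _ _ => wmin_le_kweight Φ _ _) hblocks,
    mul_le_mul_of_nonneg_left (prod_le_prod (fun _ _ => (kweight_pos Φ _ _).le)
      fun _ _ => kweight_le_wmax Φ _ _) hblocks⟩

end

/-- partition function bounds
`M_min · C_{n,m} · Z(n) · Z(m) ≤ Z(n+m) ≤ M_max · C_{n,m} · Z(n) · Z(m)`,
where `C` is the (constant) number of ways to extend a pair of interpretations on
`[n]` and `[n+1..n+m]` to a full interpretation on `[n+m]`. -/
theorem partition_function_bounds {V : Vocab} (Φ : MLN V) (d n m : ℕ)
    (hd : ∀ p ∈ Φ.formulas, 1 ≤ p.1.arity ∧ p.1.arity ≤ d)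
    (C : ℕ)
    (hC : ∀ (ω₁ : Interp V (Fin n)) (ω₂ : Interp V (Fin m)),
      Fintype.card {ω : Interp V (Fin (n + m)) //
        restrict (Fin.castAdd m) ω = ω₁ ∧ restrict (Fin.natAdd n) ω = ω₂} = C) :
    Mmin Φ d n m * C * Zpart Φ n * Zpart Φ m ≤ Zpart Φ (n + m) ∧
    Zpart Φ (n + m) ≤ Mmax Φ d n m * C * Zpart Φ n * Zpart Φ m := by
  let split (ω : Interp V (Fin (n + m))) :=
    (restrict (Fin.castAdd m) ω, restrict (Fin.natAdd n) ω)
  have hfiber : ∀ p, #{ω | split ω = p} = C := fun p => by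
    simp only [← hC p.1 p.2, Fintype.card_subtype, split, Prod.ext_iff]
  have hsplit :
      ∑ ω, weight Φ (split ω).1 * weight Φ (split ω).2 = C * (Zpart Φ n * Zpart Φ m) := by
    rw [sum_comp_eq_nsmul_sum_of_card_fiber split hfiber fun p => weight Φ p.1 * weight Φ p.2,
      nsmul_eq_mul, Zpart, Zpart, sum_mul_sum, Fintype.sum_prod_type]
  constructor
  · calc Mmin Φ d n m * C * Zpart Φ n * Zpart Φ m
        = ∑ ω, weight Φ (split ω).1 * weight Φ (split ω).2 * Mmin Φ d n m := by
          rw [← sum_mul, hsplit]; ring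
      _ ≤ Zpart Φ (n + m) := sum_le_sum fun ω _ => (weight_split_bounds Φ hd ω).1
  · calc Zpart Φ (n + m)
        ≤ ∑ ω, weight Φ (split ω).1 * weight Φ (split ω).2 * Mmax Φ d n m :=
          sum_le_sum fun ω _ => (weight_split_bounds Φ hd ω).2
      _ = Mmax Φ d n m * C * Zpart Φ n * Zpart Φ m := by
          rw [← sum_mul, hsplit]; ring
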